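/- arXiv:0906.0177 — 5 statements merged into one kernel-verified Lean document; each statement's English description precedes it below -/
import Mathlib

section
/- Let T and W be real random variables and Δ a random variable with |Δ| ≥ |T − W| almost surely. Then for all real z: −P(z − |Δ| ≤ W ≤ z) ≤ P(T ≤ z) − P(W ≤ z) ≤ P(z ≤ W ≤ z + |Δ|). -/
open MeasureTheory

lemma le_or_mem_Icc_of_abs_sub_le {t w d z : ℝ} (hwt : |t - w| ≤ d) (ht : t ≤ z) :
    w ≤ z ∨ w ∈ Set.Icc z (z + d) := by
  rcases le_or_gt w z with hw | hw
  · exact Or.inl hw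
  · exact Or.inr ⟨hw.le, by linarith [neg_abs_le (t - w)]⟩

lemma le_or_mem_Icc_sub_of_abs_sub_le {t w d z : ℝ} (hwt : |t - w| ≤ d) (hw : w ≤ z) :
    t ≤ z ∨ w ∈ Set.Icc (z - d) z := by
  rcases le_or_gt t z with ht | ht
  · exact Or.inl ht
  · exact Or.inr ⟨by linarith [le_abs_self (t - w)], hw⟩

lemma measureReal_le_add_of_ae_imp_or {Ω : Type*} [MeasurableSpace Ω] {μ : Measure Ω}
    [IsFiniteMeasure μ] {s t u : Set Ω} (h : ∀ᵐ ω ∂μ, ω ∈ s → ω ∈ t ∨ ω ∈ u) :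
    μ.real s ≤ μ.real t + μ.real u :=
  calc μ.real s ≤ μ.real (t ∪ u) := ENNReal.toReal_mono (measure_ne_top _ _) (measure_mono_ae h)
    _ ≤ μ.real t + μ.real u := measureReal_union_le t u

theorem stmt2_general {Ω : Type*} [MeasurableSpace Ω] (μ : Measure Ω) [IsProbabilityMeasure μ]
    (T W Δ : Ω → ℝ)
    (h : ∀ᵐ ω ∂μ, |T ω - W ω| ≤ |Δ ω|) (z : ℝ) :
    -(μ {ω | z - |Δ ω| ≤ W ω ∧ W ω ≤ z}).toReal
      ≤ (μ {ω | T ω ≤ z}).toReal - (μ {ω | W ω ≤ z}).toReal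
    ∧ (μ {ω | T ω ≤ z}).toReal - (μ {ω | W ω ≤ z}).toReal
      ≤ (μ {ω | z ≤ W ω ∧ W ω ≤ z + |Δ ω|}).toReal := by
  have hW_le : μ.real {ω | W ω ≤ z} ≤
      μ.real {ω | T ω ≤ z} + μ.real {ω | z - |Δ ω| ≤ W ω ∧ W ω ≤ z} :=
    measureReal_le_add_of_ae_imp_or (h.mono fun _ ↦ le_or_mem_Icc_sub_of_abs_sub_le)
  have hT_le : μ.real {ω | T ω ≤ z} ≤
      μ.real {ω | W ω ≤ z} + μ.real {ω | z ≤ W ω ∧ W ω ≤ z + |Δ ω|} :=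
    measureReal_le_add_of_ae_imp_or (h.mono fun _ ↦ le_or_mem_Icc_of_abs_sub_le)
  simp only [measureReal_def] at hW_le hT_le
  exact ⟨by linarith, by linarith⟩

/-- If `|Δ| ≥ |T − W|` a.s., then
`−P(z − |Δ| ≤ W ≤ z) ≤ P(T ≤ z) − P(W ≤ z) ≤ P(z ≤ W ≤ z + |Δ|)`. -/
theorem stmt2 {Ω : Type*} [MeasurableSpace Ω] (μ : Measure Ω) [IsProbabilityMeasure μ]
    (T W Δ : Ω → ℝ) (hT : Measurable T) (hW : Measurable W) (hΔ : Measurable Δ)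
    (h : ∀ᵐ ω ∂μ, |T ω - W ω| ≤ |Δ ω|) (z : ℝ) :
    -(μ {ω | z - |Δ ω| ≤ W ω ∧ W ω ≤ z}).toReal
      ≤ (μ {ω | T ω ≤ z}).toReal - (μ {ω | W ω ≤ z}).toReal
    ∧ (μ {ω | T ω ≤ z}).toReal - (μ {ω | W ω ≤ z}).toReal
      ≤ (μ {ω | z ≤ W ω ∧ W ω ≤ z + |Δ ω|}).toReal :=
  stmt2_general μ T W Δ h z
end

section
/- Let ξ be a real random variable with E ξ = 0 and E ξ² ≤ 1, and let ξ̄ := ξ·1{ξ ≤ 1} and c > 0. Define the tilted variable ξ̂ by E f(ξ̂) = E f(ξ) e^{c ξ̄} / E e^{c ξ̄} for all bounded Borel f. Then E|ξ̂|^p ≤ e^{2c} E|ξ|^p for every p ≥ 1, and |E ξ̂| ≤ c e^{2c} E ξ². -/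
/-!
Since `ξ̄ ≤ 1`, the weight `e^{c ξ̄}` is at most `e^c`. Since `ξ̄ ≥ ξ - ξ²`, we get
`E ξ̄ ≥ E ξ - E ξ² ≥ -1`, so by Jensen the normaliser `E e^{c ξ̄}` is at least `e^{-c}`; together
these give the factor `e^{2c}`. For the mean, `E ξ = 0` lets us replace `ξ e^{c ξ̄}` by
`ξ (e^{c ξ̄} - 1)`, and `|e^x - 1| ≤ |x| e^c` for `x ≤ c` bounds this by `c e^c ξ²`.
-/

open MeasureTheory Real

lemma Real.abs_exp_sub_one_le_mul_exp {x c : ℝ} (hc : 0 ≤ c) (hx : x ≤ c) :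
    |exp x - 1| ≤ |x| * exp c := by
  rcases le_total 0 x with hx₀ | hx₀
  · have hmul : (1 - x) * exp x ≤ 1 := by
      simpa [← exp_add] using
        mul_le_mul_of_nonneg_right (one_sub_le_exp_neg x) (exp_pos x).le
    rw [abs_of_nonneg (by linarith [add_one_le_exp x]), abs_of_nonneg hx₀]
    nlinarith [exp_le_exp.2 hx]
  · rw [abs_of_nonpos (by linarith [exp_le_one_iff.2 hx₀]), abs_of_nonpos hx₀]
    nlinarith [add_one_le_exp x, one_le_exp hc]

lemma div_le_exp_two_mul_mul {N D A c : ℝ} (hA : 0 ≤ A) (hN : N ≤ exp c * A)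
    (hD : exp (-c) ≤ D) : N / D ≤ exp (2 * c) * A := by
  rw [div_le_iff₀ ((exp_pos _).trans_le hD)]
  calc N ≤ exp c * A := hN
    _ = exp (2 * c) * A * exp (-c) := by rw [mul_right_comm, ← exp_add]; ring_nf
    _ ≤ exp (2 * c) * A * D := by gcongr

lemma exp_le_integral_exp {Ω : Type*} [MeasurableSpace Ω] {μ : Measure Ω}
    [IsProbabilityMeasure μ] {X : Ω → ℝ} {a : ℝ} (hX : Integrable X μ)
    (hexp : Integrable (fun ω => exp (X ω)) μ) (ha : a ≤ ∫ ω, X ω ∂μ) :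
    exp a ≤ ∫ ω, exp (X ω) ∂μ :=
  (exp_le_exp.2 ha).trans <|
    convexOn_exp.map_integral_le continuousOn_exp isClosed_univ (by simp) hX hexp

lemma sub_sq_le_ite_le_one (x : ℝ) : x - x ^ 2 ≤ if x ≤ 1 then x else 0 := by
  split_ifs <;> nlinarith

lemma exp_mul_ite_le_one_le {c : ℝ} (hc : 0 ≤ c) (x : ℝ) :
    exp (c * if x ≤ 1 then x else 0) ≤ exp c := by
  refine exp_le_exp.2 (mul_le_of_le_one_right hc ?_)
  split_ifs with h
  · exact h
  · exact zero_le_one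

lemma abs_mul_exp_mul_ite_le_one_sub_one_le {c : ℝ} (hc : 0 ≤ c) (x : ℝ) :
    |x * (exp (c * if x ≤ 1 then x else 0) - 1)| ≤ c * exp c * x ^ 2 := by
  split_ifs with h
  · calc |x * (exp (c * x) - 1)| ≤ |x| * (|c * x| * exp c) := by
          rw [abs_mul]
          gcongr
          exact abs_exp_sub_one_le_mul_exp hc (by nlinarith)
      _ = c * exp c * x ^ 2 := by
          rw [abs_mul, abs_of_nonneg hc, ← sq_abs x]; ring
  · simp only [mul_zero, exp_zero, sub_self, abs_zero]
    positivity

section Tilt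

variable {Ω : Type*} [MeasurableSpace Ω] {μ : Measure Ω} {ξ : Ω → ℝ} {c : ℝ}

lemma aemeasurable_ite_le_one (hξ : AEMeasurable ξ μ) :
    AEMeasurable (fun ω => if ξ ω ≤ 1 then ξ ω else 0) μ :=
  (Measurable.ite (measurableSet_le measurable_id measurable_const) measurable_id
    measurable_const).comp_aemeasurable hξ

lemma integrable_ite_le_one (hξ : Integrable ξ μ) :
    Integrable (fun ω => if ξ ω ≤ 1 then ξ ω else 0) μ :=
  hξ.mono (aemeasurable_ite_le_one hξ.aemeasurable).aestronglyMeasurable <|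
    ae_of_all _ fun ω => by split_ifs <;> simp

lemma integrable_mul_exp_mul_ite_le_one {f : Ω → ℝ} (hc : 0 ≤ c) (hξ : AEMeasurable ξ μ)
    (hf : Integrable f μ) :
    Integrable (fun ω => f ω * exp (c * if ξ ω ≤ 1 then ξ ω else 0)) μ :=
  hf.mul_bdd ((aemeasurable_ite_le_one hξ).const_mul c).exp.aestronglyMeasurable <|
    ae_of_all _ fun ω => by
      rw [norm_of_nonneg (exp_pos _).le]; exact exp_mul_ite_le_one_le hc (ξ ω)

lemma integrable_exp_mul_ite_le_one [IsFiniteMeasure μ] (hc : 0 ≤ c)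
    (hξ : AEMeasurable ξ μ) :
    Integrable (fun ω => exp (c * if ξ ω ≤ 1 then ξ ω else 0)) μ := by
  simpa using integrable_mul_exp_mul_ite_le_one hc hξ (integrable_const (1 : ℝ))

lemma exp_neg_le_integral_exp_mul_ite_le_one [IsProbabilityMeasure μ] (hc : 0 ≤ c)
    (hξ : Integrable ξ μ)
    (hξ2 : Integrable (fun ω => ξ ω ^ 2) μ) (hmean : ∫ ω, ξ ω ∂μ = 0)
    (hvar : ∫ ω, ξ ω ^ 2 ∂μ ≤ 1) :
    exp (-c) ≤ ∫ ω, exp (c * if ξ ω ≤ 1 then ξ ω else 0) ∂μ := by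
  have htrunc : -1 ≤ ∫ ω, (if ξ ω ≤ 1 then ξ ω else 0) ∂μ := by
    have := integral_mono (f := fun ω => ξ ω - ξ ω ^ 2) (hξ.sub hξ2)
      (integrable_ite_le_one hξ) fun ω => sub_sq_le_ite_le_one (ξ ω)
    rw [integral_sub hξ hξ2, hmean] at this
    linarith
  refine exp_le_integral_exp ((integrable_ite_le_one hξ).const_mul c)
    (integrable_exp_mul_ite_le_one hc hξ.aemeasurable) ?_
  rw [integral_const_mul]
  nlinarith

lemma integral_mul_exp_mul_ite_le_one_le {f : Ω → ℝ} (hc : 0 ≤ c) (hξ : AEMeasurable ξ μ)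
    (hf₀ : ∀ ω, 0 ≤ f ω) (hf : Integrable f μ) :
    ∫ ω, f ω * exp (c * if ξ ω ≤ 1 then ξ ω else 0) ∂μ ≤ exp c * ∫ ω, f ω ∂μ := by
  rw [← integral_const_mul]
  refine integral_mono (integrable_mul_exp_mul_ite_le_one hc hξ hf) (hf.const_mul _)
    fun ω => ?_
  rw [mul_comm (exp c)]
  exact mul_le_mul_of_nonneg_left (exp_mul_ite_le_one_le hc (ξ ω)) (hf₀ ω)

lemma abs_integral_mul_exp_mul_ite_le_one_le (hc : 0 ≤ c) (hξ : Integrable ξ μ)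
    (hξ2 : Integrable (fun ω => ξ ω ^ 2) μ) (hmean : ∫ ω, ξ ω ∂μ = 0) :
    |∫ ω, ξ ω * exp (c * if ξ ω ≤ 1 then ξ ω else 0) ∂μ| ≤
      c * exp c * ∫ ω, ξ ω ^ 2 ∂μ := by
  have htilt := integrable_mul_exp_mul_ite_le_one hc hξ.aemeasurable hξ
  have hcentre : ∫ ω, ξ ω * exp (c * if ξ ω ≤ 1 then ξ ω else 0) ∂μ =
      ∫ ω, ξ ω * (exp (c * if ξ ω ≤ 1 then ξ ω else 0) - 1) ∂μ := by
    simp_rw [mul_sub_one]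
    rw [integral_sub htilt hξ, hmean, sub_zero]
  rw [hcentre, ← integral_const_mul]
  refine (abs_integral_le_integral_abs).trans <|
    integral_mono ?_ (hξ2.const_mul _) fun ω => abs_mul_exp_mul_ite_le_one_sub_one_le hc (ξ ω)
  simp_rw [mul_sub_one]
  exact (htilt.sub hξ).abs

end Tilt

theorem stmt6_general {Ω : Type*} [MeasurableSpace Ω] (μ : Measure Ω) [IsProbabilityMeasure μ]
    (ξ : Ω → ℝ) (hint : Integrable ξ μ)
    (hint2 : Integrable (fun ω => ξ ω ^ 2) μ)
    (hmean : ∫ ω, ξ ω ∂μ = 0) (hvar : ∫ ω, ξ ω ^ 2 ∂μ ≤ 1)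
    (c p : ℝ) (hc : 0 < c)
    (hintp : Integrable (fun ω => |ξ ω| ^ p) μ) :
    ((∫ ω, |ξ ω| ^ p * Real.exp (c * (if ξ ω ≤ 1 then ξ ω else 0)) ∂μ)
        / (∫ ω, Real.exp (c * (if ξ ω ≤ 1 then ξ ω else 0)) ∂μ)
      ≤ Real.exp (2 * c) * ∫ ω, |ξ ω| ^ p ∂μ) ∧
    |(∫ ω, ξ ω * Real.exp (c * (if ξ ω ≤ 1 then ξ ω else 0)) ∂μ)
        / (∫ ω, Real.exp (c * (if ξ ω ≤ 1 then ξ ω else 0)) ∂μ)|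
      ≤ c * Real.exp (2 * c) * ∫ ω, ξ ω ^ 2 ∂μ := by
  have hD := exp_neg_le_integral_exp_mul_ite_le_one hc.le hint hint2 hmean hvar
  refine ⟨div_le_exp_two_mul_mul (integral_nonneg fun ω => by positivity)
    (integral_mul_exp_mul_ite_le_one_le hc.le hint.aemeasurable (fun ω => by positivity) hintp)
    hD, ?_⟩
  rw [abs_div, abs_of_pos ((exp_pos _).trans_le hD), mul_comm c, mul_assoc]
  refine div_le_exp_two_mul_mul (mul_nonneg hc.le (integral_nonneg fun ω => sq_nonneg _)) ?_ hD
  linarith [abs_integral_mul_exp_mul_ite_le_one_le hc.le hint hint2 hmean]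

/-- Cramér tilt: for `ξ` with `E ξ = 0`, `E ξ² ≤ 1`, `ξ̄ = ξ·1{ξ ≤ 1}` and `c > 0`,
the tilted variable `ξ̂` (whose expectations satisfy
`E f(ξ̂) = E f(ξ) e^{c ξ̄} / E e^{c ξ̄}`) satisfies `E|ξ̂|^p ≤ e^{2c} E|ξ|^p` for `p ≥ 1`
and `|E ξ̂| ≤ c e^{2c} E ξ²`. -/
theorem stmt6 {Ω : Type*} [MeasurableSpace Ω] (μ : Measure Ω) [IsProbabilityMeasure μ]
    (ξ : Ω → ℝ) (hmeas : Measurable ξ) (hint : Integrable ξ μ)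
    (hint2 : Integrable (fun ω => ξ ω ^ 2) μ)
    (hmean : ∫ ω, ξ ω ∂μ = 0) (hvar : ∫ ω, ξ ω ^ 2 ∂μ ≤ 1)
    (c p : ℝ) (hc : 0 < c) (hp : 1 ≤ p)
    (hintp : Integrable (fun ω => |ξ ω| ^ p) μ) :
    ((∫ ω, |ξ ω| ^ p * Real.exp (c * (if ξ ω ≤ 1 then ξ ω else 0)) ∂μ)
        / (∫ ω, Real.exp (c * (if ξ ω ≤ 1 then ξ ω else 0)) ∂μ)
      ≤ Real.exp (2 * c) * ∫ ω, |ξ ω| ^ p ∂μ) ∧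
    |(∫ ω, ξ ω * Real.exp (c * (if ξ ω ≤ 1 then ξ ω else 0)) ∂μ)
        / (∫ ω, Real.exp (c * (if ξ ω ≤ 1 then ξ ω else 0)) ∂μ)|
      ≤ c * Real.exp (2 * c) * ∫ ω, ξ ω ^ 2 ∂μ :=
  stmt6_general μ ξ hint hint2 hmean hvar c p hc hintp
end

section
/- Let (X, Y) be a pair of standardized real random variables (E X = E Y = 0, E X² = E Y² = 1) with ρ := E XY. If E(XY − (ρ/2)(X² + Y²))² = 0, then there exists κ ∈ ℝ such that almost surely Y = κX or X = κY; moreover then ρ = 2κ/(κ²+1). Conversely, if (X,Y) lies a.s. on the union of the two lines through the origin with slopes κ and 1/κ, then E(XY − (ρ/2)(X²+Y²))² = 0. -/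
open MeasureTheory

/-- Degeneracy of the asymptotic variance of Pearson's correlation coefficient:
for standardized `X, Y` with `ρ = E XY`, `E(XY − (ρ/2)(X²+Y²))² = 0` iff `(X,Y)` lies
a.s. on the union of two lines through the origin with slopes `κ` and `1/κ`,
in which case `ρ = 2κ/(κ²+1)`. -/
theorem stmt13 {Ω : Type*} [MeasurableSpace Ω] (P : Measure Ω) [IsProbabilityMeasure P]
    (X Y : Ω → ℝ) (hXm : Measurable X) (hYm : Measurable Y)
    (hX2 : Integrable (fun ω => X ω ^ 2) P) (hY2 : Integrable (fun ω => Y ω ^ 2) P)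
    (hXY : Integrable (fun ω => X ω * Y ω) P)
    (hmeanX : ∫ ω, X ω ∂P = 0) (hmeanY : ∫ ω, Y ω ∂P = 0)
    (hvarX : ∫ ω, X ω ^ 2 ∂P = 1) (hvarY : ∫ ω, Y ω ^ 2 ∂P = 1)
    (ρ : ℝ) (hρ : ρ = ∫ ω, X ω * Y ω ∂P)
    (hint4 : Integrable
      (fun ω => (X ω * Y ω - (ρ / 2) * (X ω ^ 2 + Y ω ^ 2)) ^ 2) P) :
    ((∫ ω, (X ω * Y ω - (ρ / 2) * (X ω ^ 2 + Y ω ^ 2)) ^ 2 ∂P) = 0 →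
      ∃ κ : ℝ, (∀ᵐ ω ∂P, Y ω = κ * X ω ∨ X ω = κ * Y ω) ∧ ρ = 2 * κ / (κ ^ 2 + 1)) ∧
    (∀ κ : ℝ, (∀ᵐ ω ∂P, Y ω = κ * X ω ∨ X ω = κ * Y ω) →
      (∫ ω, (X ω * Y ω - (ρ / 2) * (X ω ^ 2 + Y ω ^ 2)) ^ 2 ∂P) = 0) := by
  have hsum : Integrable (fun ω => X ω ^ 2 + Y ω ^ 2) P := hX2.add hY2
  have hI : Integrable (fun ω => (ρ / 2) * (X ω ^ 2 + Y ω ^ 2)) P := by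
    simpa using hsum.const_mul (ρ / 2)
  have hZint : Integrable (fun ω => X ω * Y ω - (ρ / 2) * (X ω ^ 2 + Y ω ^ 2)) P :=
    hXY.sub hI
  have hsumint : ∫ ω, (X ω ^ 2 + Y ω ^ 2) ∂P = 2 := by
    rw [integral_add hX2 hY2, hvarX, hvarY]; norm_num
  have hZmean : ∫ ω, (X ω * Y ω - (ρ / 2) * (X ω ^ 2 + Y ω ^ 2)) ∂P = 0 := by
    rw [integral_sub hXY hI, integral_const_mul, hsumint, ← hρ]
    ring
  constructor
  · intro h0
    have hsq : (fun ω => (X ω * Y ω - (ρ / 2) * (X ω ^ 2 + Y ω ^ 2)) ^ 2) =ᵐ[P] 0 :=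
      (integral_eq_zero_iff_of_nonneg (fun ω => sq_nonneg _) hint4).mp h0
    have hZ0 : ∀ᵐ ω ∂P, X ω * Y ω = (ρ / 2) * (X ω ^ 2 + Y ω ^ 2) := by
      filter_upwards [hsq] with ω hω
      have h' : (X ω * Y ω - (ρ / 2) * (X ω ^ 2 + Y ω ^ 2)) ^ 2 = 0 := by simpa using hω
      have := sq_eq_zero_iff.mp h'
      linarith [this]
    have hρle : |ρ| ≤ 1 := by
      have hmono : ∫ ω, (|ρ| / 2) * (X ω ^ 2 + Y ω ^ 2) ∂P ≤
          ∫ ω, (1 / 2 : ℝ) * (X ω ^ 2 + Y ω ^ 2) ∂P := by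
        refine integral_mono_ae (by simpa using hsum.const_mul (|ρ| / 2))
          (by simpa using hsum.const_mul (1 / 2 : ℝ)) ?_
        filter_upwards [hZ0] with ω hω
        rcases le_or_gt 0 ρ with h | h
        · rw [abs_of_nonneg h]
          nlinarith [sq_nonneg (X ω - Y ω)]
        · rw [abs_of_neg h]
          nlinarith [sq_nonneg (X ω + Y ω)]
      rw [integral_const_mul, integral_const_mul, hsumint] at hmono
      linarith
    by_cases hρ0 : ρ = 0
    · refine ⟨0, ?_, by simp [hρ0]⟩
      filter_upwards [hZ0] with ω hω
      have hxy : X ω * Y ω = 0 := by rw [hρ0] at hω; linarith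
      rcases mul_eq_zero.mp hxy with h | h
      · right; simp [h]
      · left; simp [h]
    · obtain ⟨s, hs⟩ : ∃ s : ℝ, s = Real.sqrt (1 - ρ ^ 2) := ⟨_, rfl⟩
      have hs2 : s ^ 2 = 1 - ρ ^ 2 := by
        rw [hs]; exact Real.sq_sqrt (by nlinarith [abs_le.mp hρle])
      obtain ⟨κ, hκ⟩ : ∃ κ : ℝ, κ = (1 - s) / ρ := ⟨_, rfl⟩
      have hk : ρ * (κ ^ 2 + 1) = 2 * κ := by
        rw [hκ]
        field_simp
        nlinarith [hs2]
      have hpos : (κ ^ 2 + 1) ≠ 0 := by positivity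
      refine ⟨κ, ?_, by rw [eq_div_iff hpos]; linarith⟩
      filter_upwards [hZ0] with ω hω
      have hfac : (Y ω - κ * X ω) * (X ω - κ * Y ω) = 0 := by
        linear_combination (1 + κ ^ 2) * hω + ((X ω ^ 2 + Y ω ^ 2) / 2) * hk
      rcases mul_eq_zero.mp hfac with h | h
      · left; linarith
      · right; linarith
  · intro κ h
    obtain ⟨c, hc⟩ : ∃ c : ℝ, c = κ - (ρ / 2) * (κ ^ 2 + 1) := ⟨_, rfl⟩
    have hZform : ∀ᵐ ω ∂P, (X ω * Y ω - (ρ / 2) * (X ω ^ 2 + Y ω ^ 2)) = c * X ω ^ 2 ∨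
        (X ω * Y ω - (ρ / 2) * (X ω ^ 2 + Y ω ^ 2)) = c * Y ω ^ 2 := by
      filter_upwards [h] with ω hω
      rcases hω with h' | h'
      · left; rw [h', hc]; ring
      · right; rw [h', hc]; ring
    have hZ0 : ∀ᵐ ω ∂P, X ω * Y ω - (ρ / 2) * (X ω ^ 2 + Y ω ^ 2) = 0 := by
      rcases le_or_gt 0 c with hcp | hcn
      · have hnn : 0 ≤ᵐ[P] (fun ω => X ω * Y ω - (ρ / 2) * (X ω ^ 2 + Y ω ^ 2)) := by
          filter_upwards [hZform] with ω hω
          simp only [Pi.zero_apply]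
          rcases hω with h' | h' <;> rw [h']
          · nlinarith [sq_nonneg (X ω)]
          · nlinarith [sq_nonneg (Y ω)]
        have := (integral_eq_zero_iff_of_nonneg_ae hnn hZint).mp hZmean
        filter_upwards [this] with ω hω
        simpa using hω
      · have hnn : 0 ≤ᵐ[P] (fun ω => -(X ω * Y ω - (ρ / 2) * (X ω ^ 2 + Y ω ^ 2))) := by
          filter_upwards [hZform] with ω hω
          simp only [Pi.zero_apply]
          rcases hω with h' | h' <;> rw [h']
          · nlinarith [sq_nonneg (X ω)]
          · nlinarith [sq_nonneg (Y ω)]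
        have hmean' : ∫ ω, -(X ω * Y ω - (ρ / 2) * (X ω ^ 2 + Y ω ^ 2)) ∂P = 0 := by
          rw [integral_neg, hZmean, neg_zero]
        have := (integral_eq_zero_iff_of_nonneg_ae hnn hZint.neg).mp hmean'
        filter_upwards [this] with ω hω
        have h2 : -(X ω * Y ω - (ρ / 2) * (X ω ^ 2 + Y ω ^ 2)) = 0 := by simpa using hω
        linarith
    have hcongr : (fun ω => (X ω * Y ω - (ρ / 2) * (X ω ^ 2 + Y ω ^ 2)) ^ 2) =ᵐ[P]
        (fun _ => (0 : ℝ)) := by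
      filter_upwards [hZ0] with ω hω
      simp [hω]
    rw [integral_congr_ae hcongr, integral_zero]
end

section
/- Let X be a random vector in ℝ^k with E X = μ ≠ 0 and Cov X = I. Then E(((X−μ)ᵀμ)² − 2(X−μ)ᵀμ − μᵀμ)² = 0 if and only if (X−μ)ᵀμ takes a.s. only the two values 1 + √(1+‖μ‖²) and 1 − √(1+‖μ‖²), with P((X−μ)ᵀμ = 1+√(1+‖μ‖²)) = (1/2)(1 − 1/√(1+‖μ‖²)). -/
/-!
The centred variable `Z = ⟪X - μ, μ⟫` has mean zero, and `E q(Z)² = 0` for the quadratic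
`q(z) = z² - 2z - ‖μ‖²` exactly when `Z` lies a.s. in the root set `{1 ± s}` of `q`,
`s = √(1 + ‖μ‖²)`. For such a two-point variable, `E Z = (1 - s) + 2s·P(Z = 1 + s)`, so the
mean-zero condition forces `P(Z = 1 + s) = (s - 1) / (2s)`.
-/

open MeasureTheory
open scoped RealInnerProductSpace

lemma sq_sub_two_mul_sub_eq_zero_iff {m s z : ℝ} (hs : s ^ 2 = 1 + m) :
    z ^ 2 - 2 * z - m = 0 ↔ z = 1 + s ∨ z = 1 - s := by
  have hfactor : z ^ 2 - 2 * z - m = (z - (1 + s)) * (z - (1 - s)) := by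
    linear_combination hs
  rw [hfactor, mul_eq_zero, sub_eq_zero, sub_eq_zero]

section

variable {Ω : Type*} [MeasurableSpace Ω] {P : Measure Ω}

lemma integral_sq_eq_zero_iff_ae_eq_zero {f : Ω → ℝ} (hf : Integrable (fun ω => f ω ^ 2) P) :
    ∫ ω, f ω ^ 2 ∂P = 0 ↔ ∀ᵐ ω ∂P, f ω = 0 := by
  rw [integral_eq_zero_iff_of_nonneg (fun ω => sq_nonneg (f ω)) hf]
  simp only [Filter.EventuallyEq, Pi.zero_apply, sq_eq_zero_iff]

lemma integral_eq_of_ae_eq_or_eq [IsProbabilityMeasure P] {Z : Ω → ℝ} (hZ : AEMeasurable Z P)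
    {a b : ℝ} (hab : ∀ᵐ ω ∂P, Z ω = a ∨ Z ω = b) :
    ∫ ω, Z ω ∂P = b + (a - b) * P.real {ω | Z ω = a} := by
  have hA : NullMeasurableSet {ω | Z ω = a} P :=
    hZ.nullMeasurableSet_preimage (measurableSet_singleton a)
  have hZ_eq : Z =ᵐ[P] fun ω => b + {ω | Z ω = a}.indicator (fun _ => a - b) ω := by
    filter_upwards [hab] with ω hω
    by_cases h : Z ω = a
    · simp [h]
    · simp [Set.indicator_of_notMem (show ω ∉ {ω | Z ω = a} from h), hω.resolve_left h]
  rw [integral_congr_ae hZ_eq, integral_add (integrable_const b)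
    ((integrable_const (a - b)).indicator₀ hA), integral_indicator₀ hA]
  simp [mul_comm]

lemma integral_sq_sub_two_mul_sub_eq_zero_iff [IsProbabilityMeasure P] {Z : Ω → ℝ} (hZ : Integrable Z P) (hZ_mean : ∫ ω, Z ω ∂P = 0)
    {m : ℝ} (hm : 0 < 1 + m) (hint : Integrable (fun ω => (Z ω ^ 2 - 2 * Z ω - m) ^ 2) P) :
    (∫ ω, (Z ω ^ 2 - 2 * Z ω - m) ^ 2 ∂P) = 0 ↔
      ((∀ᵐ ω ∂P, Z ω = 1 + Real.sqrt (1 + m) ∨ Z ω = 1 - Real.sqrt (1 + m)) ∧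
        P.real {ω | Z ω = 1 + Real.sqrt (1 + m)} = (1 / 2) * (1 - 1 / Real.sqrt (1 + m))) := by
  set s := Real.sqrt (1 + m)
  have hs : s ^ 2 = 1 + m := Real.sq_sqrt hm.le
  have hs_pos : 0 < s := Real.sqrt_pos.mpr hm
  rw [integral_sq_eq_zero_iff_ae_eq_zero hint]
  simp only [sq_sub_two_mul_sub_eq_zero_iff hs]
  refine ⟨fun hab => ⟨hab, ?_⟩, And.left⟩
  have hmean := integral_eq_of_ae_eq_or_eq hZ.aemeasurable hab
  rw [hZ_mean] at hmean
  field_simp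
  linarith

lemma integral_inner_sub_integral_eq_zero {E : Type*} [IsProbabilityMeasure P]
    [NormedAddCommGroup E] [InnerProductSpace ℝ E] [CompleteSpace E]
    {X : Ω → E} (hX : Integrable X P) (v : E) :
    ∫ ω, ⟪X ω - ∫ ω', X ω' ∂P, v⟫ ∂P = 0 := by
  simp_rw [real_inner_comm v]
  rw [integral_inner (f := fun ω => X ω - ∫ ω', X ω' ∂P) (hX.sub (integrable_const _)),
    integral_sub hX (integrable_const _)]
  simp

end

theorem stmt14_general {Ω : Type*} [MeasurableSpace Ω] (P : Measure Ω) [IsProbabilityMeasure P]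
    {k : ℕ} (X : Ω → EuclideanSpace ℝ (Fin k))
    (hXint : Integrable X P)
    (μv : EuclideanSpace ℝ (Fin k))
    (hmean : ∫ ω, X ω ∂P = μv)
    (hint4 : Integrable (fun ω =>
      (⟪X ω - μv, μv⟫ ^ 2 - 2 * ⟪X ω - μv, μv⟫ - ‖μv‖ ^ 2) ^ 2) P) :
    (∫ ω, (⟪X ω - μv, μv⟫ ^ 2 - 2 * ⟪X ω - μv, μv⟫ - ‖μv‖ ^ 2) ^ 2 ∂P) = 0 ↔
      ((∀ᵐ ω ∂P, ⟪X ω - μv, μv⟫ = 1 + Real.sqrt (1 + ‖μv‖ ^ 2)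
          ∨ ⟪X ω - μv, μv⟫ = 1 - Real.sqrt (1 + ‖μv‖ ^ 2)) ∧
        (P {ω | ⟪X ω - μv, μv⟫ = 1 + Real.sqrt (1 + ‖μv‖ ^ 2)}).toReal
          = (1 / 2) * (1 - 1 / Real.sqrt (1 + ‖μv‖ ^ 2))) := by
  subst hmean
  exact integral_sq_sub_two_mul_sub_eq_zero_iff
    ((hXint.sub (integrable_const _)).inner_const _)
    (integral_inner_sub_integral_eq_zero hXint _) (by positivity) hint4

/-- Degeneracy for the non-central Hotelling statistic: for `X` in `ℝ^k` with mean
`μv ≠ 0` and identity covariance, writing `Z = (X−μv)ᵀμv`,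
`E(Z² − 2Z − ‖μv‖²)² = 0` iff `Z` takes a.s. only the values `1 ± √(1+‖μv‖²)`, with
`P(Z = 1+√(1+‖μv‖²)) = (1/2)(1 − 1/√(1+‖μv‖²))`. -/
theorem stmt14 {Ω : Type*} [MeasurableSpace Ω] (P : Measure Ω) [IsProbabilityMeasure P]
    {k : ℕ} (hk : 2 ≤ k) (X : Ω → EuclideanSpace ℝ (Fin k))
    (hXm : Measurable X) (hXint : Integrable X P)
    (μv : EuclideanSpace ℝ (Fin k)) (hμv : μv ≠ 0)
    (hmean : ∫ ω, X ω ∂P = μv)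
    (hcovint : ∀ u v : EuclideanSpace ℝ (Fin k),
      Integrable (fun ω => ⟪X ω - μv, u⟫ * ⟪X ω - μv, v⟫) P)
    (hcov : ∀ u v : EuclideanSpace ℝ (Fin k),
      ∫ ω, ⟪X ω - μv, u⟫ * ⟪X ω - μv, v⟫ ∂P = ⟪u, v⟫)
    (hint4 : Integrable (fun ω =>
      (⟪X ω - μv, μv⟫ ^ 2 - 2 * ⟪X ω - μv, μv⟫ - ‖μv‖ ^ 2) ^ 2) P) :
    (∫ ω, (⟪X ω - μv, μv⟫ ^ 2 - 2 * ⟪X ω - μv, μv⟫ - ‖μv‖ ^ 2) ^ 2 ∂P) = 0 ↔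
      ((∀ᵐ ω ∂P, ⟪X ω - μv, μv⟫ = 1 + Real.sqrt (1 + ‖μv‖ ^ 2)
          ∨ ⟪X ω - μv, μv⟫ = 1 - Real.sqrt (1 + ‖μv‖ ^ 2)) ∧
        (P {ω | ⟪X ω - μv, μv⟫ = 1 + Real.sqrt (1 + ‖μv‖ ^ 2)}).toReal
          = (1 / 2) * (1 - 1 / Real.sqrt (1 + ‖μv‖ ^ 2))) :=
  stmt14_general P X hXint μv hmean hint4
end

section
/- Let (X, Y) be the random point in ℝ² taking values (cx, κcx), (−cx, −κcx), (κcy, cy), (−κcy, −cy) with probabilities p/2, p/2, q/2, q/2 respectively, where x ≠ 0, y ≠ 0, κ ∈ ℝ, c := √((x⁻² + y⁻²)/(κ²+1)), p := y²/(x²+y²), q := 1−p. Then E X = E Y = 0, E X² = E Y² = 1, and with ρ := E XY one has XY = (ρ/2)(X² + Y²) almost surely. -/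
open MeasureTheory

/-!
The four atoms lie on the lines `Y = κX` and `X = κY`, on both of which
`XY = κ / (κ² + 1) · (X² + Y²)`. The constants are chosen so that both pairs of atoms carry the
same second moment `p (cx)² = q (cy)² = 1 / (κ² + 1)`; this makes `X` and `Y` standardized with
`ρ = 2κ / (κ² + 1)`, while the symmetry `z ↦ -z` of the law centres them.
-/

section FourPointLaw

variable {α E : Type*} [MeasurableSpace α] [MeasurableSingletonClass α]
  [NormedAddCommGroup E] (u₁ u₂ u₃ u₄ : α)

theorem integrable_ofReal_smul_dirac (w : ℝ) (u : α) (f : α → E) :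
    Integrable f (ENNReal.ofReal w • Measure.dirac u) :=
  (integrable_dirac enorm_lt_top).smul_measure ENNReal.ofReal_ne_top

theorem integrable_four_dirac (w₁ w₂ w₃ w₄ : ℝ) (f : α → E) :
    Integrable f (ENNReal.ofReal w₁ • Measure.dirac u₁ + ENNReal.ofReal w₂ • Measure.dirac u₂
      + ENNReal.ofReal w₃ • Measure.dirac u₃ + ENNReal.ofReal w₄ • Measure.dirac u₄) := by
  have hi (w : ℝ) (u : α) := integrable_ofReal_smul_dirac w u f
  exact (((hi _ _).add_measure (hi _ _)).add_measure (hi _ _)).add_measure (hi _ _)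

theorem integral_four_dirac [NormedSpace ℝ E] [CompleteSpace E] {w₁ w₂ w₃ w₄ : ℝ}
    (h₁ : 0 ≤ w₁) (h₂ : 0 ≤ w₂) (h₃ : 0 ≤ w₃) (h₄ : 0 ≤ w₄) (f : α → E) :
    ∫ z, f z ∂(ENNReal.ofReal w₁ • Measure.dirac u₁ + ENNReal.ofReal w₂ • Measure.dirac u₂
      + ENNReal.ofReal w₃ • Measure.dirac u₃ + ENNReal.ofReal w₄ • Measure.dirac u₄)
      = w₁ • f u₁ + w₂ • f u₂ + w₃ • f u₃ + w₄ • f u₄ := by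
  have hi (w : ℝ) (u : α) := integrable_ofReal_smul_dirac w u f
  rw [integral_add_measure (((hi _ _).add_measure (hi _ _)).add_measure (hi _ _)) (hi _ _),
    integral_add_measure ((hi _ _).add_measure (hi _ _)) (hi _ _),
    integral_add_measure (hi _ _) (hi _ _)]
  simp only [integral_smul_measure, integral_dirac, ENNReal.toReal_ofReal, h₁, h₂, h₃, h₄]

theorem ae_four_dirac {P : α → Prop} (w₁ w₂ w₃ w₄ : ENNReal)
    (h₁ : P u₁) (h₂ : P u₂) (h₃ : P u₃) (h₄ : P u₄) :
    ∀ᵐ z ∂(w₁ • Measure.dirac u₁ + w₂ • Measure.dirac u₂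
      + w₃ • Measure.dirac u₃ + w₄ • Measure.dirac u₄), P z := by
  simp only [ae_add_measure_iff]
  refine ⟨⟨⟨?_, ?_⟩, ?_⟩, ?_⟩ <;> apply Measure.ae_smul_measure <;> simpa [ae_dirac_eq]

end FourPointLaw

theorem sq_div_sq_add_sq_mul_mul_sq {x y c κ : ℝ} (hx : x ≠ 0) (hy : y ≠ 0)
    (hc : c ^ 2 = (x⁻¹ ^ 2 + y⁻¹ ^ 2) / (κ ^ 2 + 1)) :
    y ^ 2 / (x ^ 2 + y ^ 2) * (c * x) ^ 2 = (κ ^ 2 + 1)⁻¹ := by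
  rw [mul_pow, hc]
  field_simp
  ring

theorem mul_sq_eq_inv_of_sqrt_eq {x y κ c p q : ℝ} (hx : x ≠ 0) (hy : y ≠ 0)
    (hc : c = Real.sqrt ((x⁻¹ ^ 2 + y⁻¹ ^ 2) / (κ ^ 2 + 1)))
    (hp : p = y ^ 2 / (x ^ 2 + y ^ 2)) (hq : q = 1 - p) :
    p * (c * x) ^ 2 = (κ ^ 2 + 1)⁻¹ ∧ q * (c * y) ^ 2 = (κ ^ 2 + 1)⁻¹ := by
  have hc2 : c ^ 2 = (x⁻¹ ^ 2 + y⁻¹ ^ 2) / (κ ^ 2 + 1) := by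
    rw [hc, Real.sq_sqrt (by positivity)]
  have hq' : q = x ^ 2 / (y ^ 2 + x ^ 2) := by
    rw [hq, hp]; field_simp; ring
  exact ⟨hp ▸ sq_div_sq_add_sq_mul_mul_sq hx hy hc2,
    hq' ▸ sq_div_sq_add_sq_mul_mul_sq hy hx (by rw [hc2, add_comm])⟩

theorem stmt17_general {Ω : Type*} [MeasurableSpace Ω] (μ : Measure Ω) [IsProbabilityMeasure μ]
    (X Y : Ω → ℝ)
    (x y κ : ℝ) (hx : x ≠ 0) (hy : y ≠ 0)
    (c p q : ℝ)
    (hc : c = Real.sqrt ((x⁻¹ ^ 2 + y⁻¹ ^ 2) / (κ ^ 2 + 1)))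
    (hp : p = y ^ 2 / (x ^ 2 + y ^ 2)) (hq : q = 1 - p)
    (hlaw : Measure.map (fun ω => (X ω, Y ω)) μ =
        ENNReal.ofReal (p / 2) • Measure.dirac (c * x, κ * c * x)
      + ENNReal.ofReal (p / 2) • Measure.dirac (-(c * x), -(κ * c * x))
      + ENNReal.ofReal (q / 2) • Measure.dirac (κ * c * y, c * y)
      + ENNReal.ofReal (q / 2) • Measure.dirac (-(κ * c * y), -(c * y))) :
    (∫ ω, X ω ∂μ = 0) ∧ (∫ ω, Y ω ∂μ = 0) ∧
    (∫ ω, X ω ^ 2 ∂μ = 1) ∧ (∫ ω, Y ω ^ 2 ∂μ = 1) ∧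
    (∀ᵐ ω ∂μ, X ω * Y ω = ((∫ ω', X ω' * Y ω' ∂μ) / 2) * (X ω ^ 2 + Y ω ^ 2)) := by
  have hp0 : 0 < p := hp ▸ by positivity
  have hq0 : 0 ≤ q := by
    rw [hq, hp, sub_nonneg]
    exact div_le_one_of_le₀ (le_add_of_nonneg_left (sq_nonneg x)) (by positivity)
  -- `Measure.map` sends maps that are not a.e.-measurable to `0`, which the law is not.
  have hmeas : AEMeasurable (fun ω => (X ω, Y ω)) μ :=
    .of_map_ne_zero (by rw [hlaw, ← Measure.measure_univ_ne_zero]; simp [hp0])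
  have hE (f : ℝ × ℝ → ℝ) : ∫ ω, f (X ω, Y ω) ∂μ =
      p / 2 * f (c * x, κ * c * x) + p / 2 * f (-(c * x), -(κ * c * x))
        + q / 2 * f (κ * c * y, c * y) + q / 2 * f (-(κ * c * y), -(c * y)) := by
    rw [← integral_map hmeas (hlaw ▸ integrable_four_dirac ..).aestronglyMeasurable, hlaw,
      integral_four_dirac _ _ _ _ (by positivity) (by positivity) (by positivity) (by positivity)]
    simp only [smul_eq_mul]
  obtain ⟨hpx, hqy⟩ := mul_sq_eq_inv_of_sqrt_eq hx hy hc hp hq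
  set m := (κ ^ 2 + 1)⁻¹
  have hm : m * (κ ^ 2 + 1) = 1 := inv_mul_cancel₀ (by positivity)
  have hρ : ∫ ω, X ω * Y ω ∂μ = 2 * κ * m := by
    rw [hE fun z => z.1 * z.2]; linear_combination κ * hpx + κ * hqy
  refine ⟨by rw [hE Prod.fst]; ring, by rw [hE Prod.snd]; ring, ?_, ?_, ?_⟩
  · rw [hE fun z => z.1 ^ 2]; linear_combination hpx + κ ^ 2 * hqy + hm
  · rw [hE fun z => z.2 ^ 2]; linear_combination κ ^ 2 * hpx + hqy + hm
  have hsupp : ∀ᵐ z ∂μ.map (fun ω => (X ω, Y ω)), z.1 * z.2 = κ * m * (z.1 ^ 2 + z.2 ^ 2) := by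
    rw [hlaw]
    apply ae_four_dirac
    · linear_combination (-κ * (c * x) ^ 2) * hm
    · linear_combination (-κ * (c * x) ^ 2) * hm
    · linear_combination (-κ * (c * y) ^ 2) * hm
    · linear_combination (-κ * (c * y) ^ 2) * hm
  filter_upwards [ae_of_ae_map hmeas hsupp] with ω hω
  rw [hρ, hω]; ring

/-- The explicit four-point distribution on which Pearson's asymptotic variance
degenerates: `(X,Y)` takes values `(cx, κcx), (−cx, −κcx), (κcy, cy), (−κcy, −cy)`
with probabilities `p/2, p/2, q/2, q/2`; then `X, Y` are standardized and
`XY = (ρ/2)(X²+Y²)` a.s., where `ρ = E XY`. -/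
theorem stmt17 {Ω : Type*} [MeasurableSpace Ω] (μ : Measure Ω) [IsProbabilityMeasure μ]
    (X Y : Ω → ℝ) (hX : Measurable X) (hY : Measurable Y)
    (x y κ : ℝ) (hx : x ≠ 0) (hy : y ≠ 0)
    (c p q : ℝ)
    (hc : c = Real.sqrt ((x⁻¹ ^ 2 + y⁻¹ ^ 2) / (κ ^ 2 + 1)))
    (hp : p = y ^ 2 / (x ^ 2 + y ^ 2)) (hq : q = 1 - p)
    (hlaw : Measure.map (fun ω => (X ω, Y ω)) μ =
        ENNReal.ofReal (p / 2) • Measure.dirac (c * x, κ * c * x)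
      + ENNReal.ofReal (p / 2) • Measure.dirac (-(c * x), -(κ * c * x))
      + ENNReal.ofReal (q / 2) • Measure.dirac (κ * c * y, c * y)
      + ENNReal.ofReal (q / 2) • Measure.dirac (-(κ * c * y), -(c * y))) :
    (∫ ω, X ω ∂μ = 0) ∧ (∫ ω, Y ω ∂μ = 0) ∧
    (∫ ω, X ω ^ 2 ∂μ = 1) ∧ (∫ ω, Y ω ^ 2 ∂μ = 1) ∧
    (∀ᵐ ω ∂μ, X ω * Y ω = ((∫ ω', X ω' * Y ω' ∂μ) / 2) * (X ω ^ 2 + Y ω ^ 2)) :=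
  stmt17_general μ X Y x y κ hx hy c p q hc hp hq hlaw
end
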